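/- arXiv:2108.03277 — 2 statements merged into one kernel-verified Lean document; each statement's English description precedes it below -/
import Mathlib

section
/- Let {(p_i^k, x_i^k)}_{k=1}^{K_i}, i ∈ N, be a group dataset and x̄ an allocation. If there exists a price q ∈ ℝ^m_+ with q ≠ 0, common to all agents, such that for every i ∈ N the augmented individual dataset {(p_i^k, x_i^k)}_{k=1}^{K_i} ∪ {(q, x̄_i)} is rationalizable, then there exist increasing, concave utilities (u_i)_{i∈N}, each u_i rationalizing agent i's original dataset, for which x̄ is Pareto efficient. -/
open Finset

/-- The dot product of two vectors in `ℝ^m`. -/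
def dot {m : ℕ} (p x : Fin m → ℝ) : ℝ := ∑ j, p j * x j

/-- `x ≪ y`: strictly smaller in every component. -/
def StrLt {m : ℕ} (x y : Fin m → ℝ) : Prop := ∀ j, x j < y j

/-- An increasing utility on the nonnegative orthant. -/
def Incr {m : ℕ} (u : (Fin m → ℝ) → ℝ) : Prop :=
  (∀ x y : Fin m → ℝ, 0 ≤ x → x ≤ y → u x ≤ u y) ∧
  (∀ x y : Fin m → ℝ, 0 ≤ x → StrLt x y → u x < u y)

/-- `u` rationalizes the individual dataset `{(p k, x k)}` : `u` is increasing and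
any bundle strictly better than `x k` is more expensive at prices `p k`. -/
def Rationalizes {m K : ℕ} (p x : Fin K → Fin m → ℝ) (u : (Fin m → ℝ) → ℝ) : Prop :=
  Incr u ∧ ∀ k, ∀ z : Fin m → ℝ, 0 ≤ z → u (x k) < u z → dot (p k) (x k) < dot (p k) z

/-- Direct revealed preference. -/
def RP {m K : ℕ} (p x : Fin K → Fin m → ℝ) (a b : Fin m → ℝ) : Prop :=
  0 ≤ a ∧ 0 ≤ b ∧ (a = b ∨ ∃ k, x k ≤ a ∧ dot (p k) b ≤ dot (p k) (x k))

/-- Direct strict revealed preference. -/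
def SRP {m K : ℕ} (p x : Fin K → Fin m → ℝ) (a b : Fin m → ℝ) : Prop :=
  0 ≤ a ∧ 0 ≤ b ∧
    ((∃ a', StrLt a' a ∧ RP p x a' b) ∨ ∃ k, x k ≤ a ∧ dot (p k) b < dot (p k) (x k))

/-- Indirect revealed preference: the transitive closure of `RP`. -/
def IRP {m K : ℕ} (p x : Fin K → Fin m → ℝ) : (Fin m → ℝ) → (Fin m → ℝ) → Prop :=
  Relation.TransGen (RP p x)

/-- Indirect strict revealed preference: a finite `RP`-chain with at least one strict link. -/
def SIRP {m K : ℕ} (p x : Fin K → Fin m → ℝ) (a b : Fin m → ℝ) : Prop :=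
  ∃ c d, Relation.ReflTransGen (RP p x) a c ∧ SRP p x c d ∧ Relation.ReflTransGen (RP p x) d b

/-- Given a profile of utilities, `yb` Pareto dominates `xb`. -/
def ParetoDom {m : ℕ} {ι : Type} [Fintype ι] (u : ι → (Fin m → ℝ) → ℝ)
    (yb xb : ι → Fin m → ℝ) : Prop :=
  (∀ i, u i (xb i) ≤ u i (yb i)) ∧ ∃ i, u i (xb i) < u i (yb i)

/-- `xb` is Pareto efficient: no allocation of the same aggregate bundle Pareto dominates it. -/
def ParetoEff {m : ℕ} {ι : Type} [Fintype ι] (u : ι → (Fin m → ℝ) → ℝ)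
    (xb : ι → Fin m → ℝ) : Prop :=
  ¬ ∃ yb : ι → Fin m → ℝ, (∀ i, 0 ≤ yb i) ∧ (∑ i, yb i) = (∑ i, xb i) ∧ ParetoDom u yb xb

/-!
Afriat's construction: rank the observations by the utility `u` that rationalizes the augmented
dataset and choose Afriat numbers `U k = -exp (-c u(x k))`, `λ k = L exp (-c u(x k))`, with
`c, L` large enough for the finitely many Afriat inequalities. The minimum of the affine
functions `U k + λ k (p k · z - p k · x k)` is then a concave, increasing utility that still
rationalizes every observation, in particular `(q, xb i)`. So anything weakly preferred to `xb i`
costs at least `q · xb i`, and an allocation that Pareto dominates `xb` would cost strictly more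
than `∑ i, xb i` at prices `q`: the first welfare theorem.
-/

lemma dot_eq_dotProduct {m : ℕ} (p x : Fin m → ℝ) : dot p x = p ⬝ᵥ x := rfl

lemma dot_lt_dot_of_strLt {m : ℕ} {p x y : Fin m → ℝ} (hp : 0 ≤ p) (hp0 : p ≠ 0)
    (hxy : StrLt x y) : dot p x < dot p y := by
  obtain ⟨j, hj⟩ := Function.ne_iff.mp hp0
  exact Finset.sum_lt_sum (fun i _ => mul_le_mul_of_nonneg_left (hxy i).le (hp i))
    ⟨j, Finset.mem_univ j, mul_lt_mul_of_pos_left (hxy j) (lt_of_le_of_ne (hp j) (Ne.symm hj))⟩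

lemma exists_strLt_dot_lt {m : ℕ} (p y : Fin m → ℝ) {c : ℝ} (hc : dot p y < c) :
    ∃ z, StrLt y z ∧ dot p z < c := by
  set s := dot p 1
  set ε := (c - dot p y) / (|s| + 1)
  have hε : 0 < ε := div_pos (sub_pos.2 hc) (by positivity)
  refine ⟨y + ε • 1, fun j => by simp [hε], ?_⟩
  have hεs : ε * (|s| + 1) = c - dot p y := div_mul_cancel₀ _ (by positivity)
  have : ε * s ≤ ε * |s| := mul_le_mul_of_nonneg_left (le_abs_self s) hε.le
  rw [dot_eq_dotProduct, dotProduct_add, dotProduct_smul, smul_eq_mul]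
  change dot p y + ε * s < c
  linarith

lemma Finite.exists_pos_forall_le_mul {α : Type*} [Finite α] (f g : α → ℝ) :
    ∃ c > 0, ∀ a, 0 < g a → f a ≤ c * g a := by
  obtain ⟨B, hB⟩ := Finite.exists_le fun a => f a / g a
  refine ⟨max B 1, by positivity, fun a ha => ?_⟩
  calc f a = f a / g a * g a := (div_mul_cancel₀ _ ha.ne').symm
    _ ≤ max B 1 * g a := by gcongr; exact (hB a).trans (le_max_left _ _)

lemma exists_afriat_numbers {ι : Type*} [Finite ι] (v : ι → ℝ) (d : ι → ι → ℝ)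
    (hlt : ∀ k j, v k < v j → 0 < d k j) (hle : ∀ k j, v k ≤ v j → 0 ≤ d k j) :
    ∃ U lam : ι → ℝ, (∀ k, 0 < lam k) ∧ ∀ j k, U j ≤ U k + lam k * d k j := by
  obtain ⟨L, hL, hLd⟩ :=
    Finite.exists_pos_forall_le_mul (fun _ : ι × ι => (1 : ℝ)) fun kj => d kj.1 kj.2
  obtain ⟨c, hc, hcv⟩ :=
    Finite.exists_pos_forall_le_mul (fun kj : ι × ι => L * -d kj.1 kj.2)
      fun kj => v kj.1 - v kj.2
  set E : ι → ℝ := fun k => Real.exp (-c * v k)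
  refine ⟨fun k => -E k, fun k => L * E k, fun k => by positivity, fun j k => ?_⟩
  have hE : 0 < E k := Real.exp_pos _
  rcases lt_trichotomy (v j) (v k) with hjk | hjk | hjk
  · have hgap : L * -d k j ≤ c * (v k - v j) := hcv (k, j) (sub_pos.2 hjk)
    have hEj : E j = E k * Real.exp (c * (v k - v j)) := by
      simp only [E, ← Real.exp_add]; ring_nf
    have : E k * (1 + L * -d k j) ≤ E j :=
      calc E k * (1 + L * -d k j) ≤ E k * (1 + c * (v k - v j)) := by gcongr
        _ ≤ E k * Real.exp (c * (v k - v j)) := by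
          gcongr; linarith [Real.add_one_le_exp (c * (v k - v j))]
        _ = E j := hEj.symm
    linarith
  · have hd := mul_nonneg (mul_nonneg hL.le hE.le) (hle k j hjk.ge)
    simp only [E, hjk] at hd ⊢
    linarith
  · have hLd := mul_le_mul_of_nonneg_left (hLd (k, j) (hlt k j hjk)) hE.le
    linarith [Real.exp_pos (-c * v j)]

section AfriatUtility

variable {m K : ℕ} [NeZero K] (P X : Fin K → Fin m → ℝ) (U lam : Fin K → ℝ)

noncomputable def afriatUtility (z : Fin m → ℝ) : ℝ :=
  Finset.univ.inf' Finset.univ_nonempty fun k => U k + lam k * (dot (P k) z - dot (P k) (X k))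

lemma afriatUtility_le (k : Fin K) (z : Fin m → ℝ) :
    afriatUtility P X U lam z ≤ U k + lam k * (dot (P k) z - dot (P k) (X k)) :=
  Finset.inf'_le _ (Finset.mem_univ k)

variable {P X U lam}

lemma afriatUtility_apply_obs
    (hU : ∀ j k, U j ≤ U k + lam k * (dot (P k) (X j) - dot (P k) (X k))) (j : Fin K) :
    afriatUtility P X U lam (X j) = U j :=
  le_antisymm ((afriatUtility_le P X U lam j (X j)).trans_eq (by simp))
    (Finset.le_inf' _ _ fun k _ => hU j k)

lemma concaveOn_afriatUtility : ConcaveOn ℝ Set.univ (afriatUtility P X U lam) := by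
  refine ⟨convex_univ, fun a _ b _ s r hs hr hsr => Finset.le_inf' _ _ fun k _ => ?_⟩
  have hdot : dot (P k) (s • a + r • b) = s * dot (P k) a + r * dot (P k) b := by
    simp only [dot_eq_dotProduct, dotProduct_add, dotProduct_smul, smul_eq_mul]
  have ha := mul_le_mul_of_nonneg_left (afriatUtility_le P X U lam k a) hs
  have hb := mul_le_mul_of_nonneg_left (afriatUtility_le P X U lam k b) hr
  simp only [smul_eq_mul, hdot]
  linear_combination ha + hb + (U k - lam k * dot (P k) (X k)) * hsr

lemma incr_afriatUtility (hP : ∀ k, 0 ≤ P k) (hP0 : ∀ k, P k ≠ 0)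
    (hlam : ∀ k, 0 < lam k) : Incr (afriatUtility P X U lam) := by
  constructor
  · intro z z' _ hzz'
    refine Finset.le_inf' _ _ fun k _ => (afriatUtility_le P X U lam k z).trans ?_
    have := dotProduct_le_dotProduct_of_nonneg_left hzz' (hP k)
    rw [← dot_eq_dotProduct, ← dot_eq_dotProduct] at this
    nlinarith [hlam k]
  · intro z z' _ hzz'
    obtain ⟨k, -, hk⟩ := Finset.exists_mem_eq_inf' Finset.univ_nonempty
      fun k => U k + lam k * (dot (P k) z' - dot (P k) (X k))
    have := dot_lt_dot_of_strLt (hP k) (hP0 k) hzz'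
    calc afriatUtility P X U lam z ≤ U k + lam k * (dot (P k) z - dot (P k) (X k)) :=
          afriatUtility_le P X U lam k z
      _ < _ := by nlinarith [hlam k]
      _ = afriatUtility P X U lam z' := hk.symm

variable (hU : ∀ j k, U j ≤ U k + lam k * (dot (P k) (X j) - dot (P k) (X k)))
  (hlam : ∀ k, 0 < lam k)
include hU hlam

lemma dot_le_of_afriatUtility_le {k : Fin K} {z : Fin m → ℝ}
    (h : afriatUtility P X U lam (X k) ≤ afriatUtility P X U lam z) :
    dot (P k) (X k) ≤ dot (P k) z := by
  have := h.trans (afriatUtility_le P X U lam k z)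
  rw [afriatUtility_apply_obs hU] at this
  nlinarith [hlam k]

lemma dot_lt_of_afriatUtility_lt {k : Fin K} {z : Fin m → ℝ}
    (h : afriatUtility P X U lam (X k) < afriatUtility P X U lam z) :
    dot (P k) (X k) < dot (P k) z := by
  have := h.trans_le (afriatUtility_le P X U lam k z)
  rw [afriatUtility_apply_obs hU] at this
  nlinarith [hlam k]

end AfriatUtility

namespace Rationalizes

variable {m K : ℕ} {P X : Fin K → Fin m → ℝ} {u : (Fin m → ℝ) → ℝ}

lemma price_ne_zero (hu : Rationalizes P X u) (hX : ∀ k, 0 ≤ X k) (k : Fin K) : P k ≠ 0 := by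
  rintro hPk
  have hlt : u (X k) < u (X k + 1) := hu.1.2 _ _ (hX k) fun j => by simp
  have := hu.2 k _ ((hX k).trans (by simp)) hlt
  simp [hPk, dot] at this

/-- Local nonsatiation turns the strict revealed preference into a weak one. -/
lemma dot_le_of_le (hu : Rationalizes P X u) {k : Fin K} {y : Fin m → ℝ} (hy : 0 ≤ y)
    (hky : u (X k) ≤ u y) : dot (P k) (X k) ≤ dot (P k) y := by
  by_contra! hlt
  obtain ⟨z, hyz, hz⟩ := exists_strLt_dot_lt (P k) y hlt
  have hz0 : 0 ≤ z := hy.trans fun j => (hyz j).le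
  exact (hu.2 k z hz0 (hky.trans_lt (hu.1.2 y z hy hyz))).not_gt hz

end Rationalizes

theorem exists_concave_rationalizes {m K : ℕ} [NeZero K] {P X : Fin K → Fin m → ℝ}
    (hP : ∀ k, 0 ≤ P k) (hX : ∀ k, 0 ≤ X k) {u : (Fin m → ℝ) → ℝ} (hu : Rationalizes P X u) :
    ∃ w : (Fin m → ℝ) → ℝ, ConcaveOn ℝ {z | 0 ≤ z} w ∧ Rationalizes P X w ∧
      ∀ k z, w (X k) ≤ w z → dot (P k) (X k) ≤ dot (P k) z := by
  obtain ⟨U, lam, hlam, hU⟩ := exists_afriat_numbers (fun k => u (X k))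
    (fun k j => dot (P k) (X j) - dot (P k) (X k))
    (fun k j h => sub_pos.2 (hu.2 k _ (hX j) h))
    (fun k j h => sub_nonneg.2 (hu.dot_le_of_le (hX j) h))
  refine ⟨afriatUtility P X U lam,
    concaveOn_afriatUtility.subset (Set.subset_univ _) (convex_Ici 0),
    ⟨incr_afriatUtility hP (hu.price_ne_zero hX) hlam,
      fun k z _ h => dot_lt_of_afriatUtility_lt hU hlam h⟩,
    fun k z h => dot_le_of_afriatUtility_le hU hlam h⟩

lemma rationalizes_snoc_iff {m K : ℕ} {P X : Fin K → Fin m → ℝ} {q xb : Fin m → ℝ}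
    {u : (Fin m → ℝ) → ℝ} :
    Rationalizes (Fin.snoc P q) (Fin.snoc X xb) u ↔
      Rationalizes P X u ∧ ∀ z, 0 ≤ z → u xb < u z → dot q xb < dot q z := by
  simp only [Rationalizes, Fin.forall_fin_succ', Fin.snoc_castSucc, Fin.snoc_last, and_assoc]

lemma snoc_nonneg {m K : ℕ} {X : Fin K → Fin m → ℝ} {xb : Fin m → ℝ} (hX : ∀ k, 0 ≤ X k)
    (hxb : 0 ≤ xb) (k : Fin (K + 1)) : 0 ≤ (Fin.snoc X xb : Fin (K + 1) → Fin m → ℝ) k :=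
  Fin.lastCases (by simpa using hxb) (fun k => by simpa using hX k) k

theorem paretoEff_of_supporting_price {m : ℕ} {ι : Type} [Fintype ι]
    {u : ι → (Fin m → ℝ) → ℝ} {xb : ι → Fin m → ℝ} (q : Fin m → ℝ)
    (hle : ∀ i z, 0 ≤ z → u i (xb i) ≤ u i z → dot q (xb i) ≤ dot q z)
    (hlt : ∀ i z, 0 ≤ z → u i (xb i) < u i z → dot q (xb i) < dot q z) :
    ParetoEff u xb := by
  rintro ⟨yb, hyb, hsum, hdom, i, hi⟩
  have hcost : ∑ i, dot q (xb i) < ∑ i, dot q (yb i) :=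
    Finset.sum_lt_sum (fun j _ => hle j _ (hyb j) (hdom j))
      ⟨i, Finset.mem_univ i, hlt i _ (hyb i) hi⟩
  simp only [dot_eq_dotProduct, ← dotProduct_sum, hsum] at hcost
  exact hcost.false

theorem stmt6_general {m : ℕ} {ι : Type} [Fintype ι]
    (K : ι → ℕ) (p x : ∀ i, Fin (K i) → Fin m → ℝ)
    (hp : ∀ i k, 0 ≤ p i k) (hx : ∀ i k, 0 ≤ x i k)
    (xb : ι → Fin m → ℝ) (hxb : ∀ i, 0 ≤ xb i)
    (h : ∃ q : Fin m → ℝ, 0 ≤ q ∧ q ≠ 0 ∧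
      ∀ i, ∃ u : (Fin m → ℝ) → ℝ, Rationalizes (p i) (x i) u ∧
        ∀ z : Fin m → ℝ, 0 ≤ z → u (xb i) < u z → dot q (xb i) < dot q z) :
    ∃ u : ι → (Fin m → ℝ) → ℝ,
      (∀ i, ConcaveOn ℝ {z : Fin m → ℝ | 0 ≤ z} (u i) ∧ Rationalizes (p i) (x i) (u i)) ∧
      ParetoEff u xb := by
  obtain ⟨q, hq, -, hu⟩ := h
  choose u hu using hu
  have hw := fun i => exists_concave_rationalizes (snoc_nonneg (hp i) hq)
    (snoc_nonneg (hx i) (hxb i)) (rationalizes_snoc_iff.2 (hu i))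
  choose w hconc hrat hweak using hw
  refine ⟨w, fun i => ⟨hconc i, (rationalizes_snoc_iff.1 (hrat i)).1⟩,
    paretoEff_of_supporting_price q (fun i z _ h => ?_)
      fun i => (rationalizes_snoc_iff.1 (hrat i)).2⟩
  simpa using hweak i (Fin.last _) z (by simpa using h)

/-- If there is a nonzero price `q ∈ ℝ^m_+`, common to all agents, such
that each augmented individual dataset `D_i ∪ {(q, xb i)}` is rationalizable, then there
are increasing, concave utilities rationalizing the original datasets for which the
allocation `xb` is Pareto efficient. -/
theorem stmt6 {m : ℕ} (hm : 0 < m) {ι : Type} [Fintype ι]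
    (K : ι → ℕ) (p x : ∀ i, Fin (K i) → Fin m → ℝ)
    (hp : ∀ i k, 0 ≤ p i k) (hx : ∀ i k, 0 ≤ x i k)
    (xb : ι → Fin m → ℝ) (hxb : ∀ i, 0 ≤ xb i)
    (h : ∃ q : Fin m → ℝ, 0 ≤ q ∧ q ≠ 0 ∧
      ∀ i, ∃ u : (Fin m → ℝ) → ℝ, Rationalizes (p i) (x i) u ∧
        ∀ z : Fin m → ℝ, 0 ≤ z → u (xb i) < u z → dot q (xb i) < dot q z) :
    ∃ u : ι → (Fin m → ℝ) → ℝ,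
      (∀ i, ConcaveOn ℝ {z : Fin m → ℝ | 0 ≤ z} (u i) ∧ Rationalizes (p i) (x i) (u i)) ∧
      ParetoEff u xb :=
  stmt6_general K p x hp hx xb hxb h
end

section
/- Let D = {(p^k, x^k)}_{k=1}^K and D' = {(p^k, y^k)}_{k=1}^K be individual datasets with the same strictly positive prices p^k ∈ ℝ^m_{++} in each observation, each rationalizable, and suppose x^l < y^k (componentwise ≤ and ≠) for all k, l ∈ {1,…,K}. Then the combined dataset D ∪ D' is rationalizable. -/
open Finset

/-!
Let `u` and `v` rationalize the two datasets. Adding to `u` the penalty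
`w z = ∏ₖ (pᵏ·z - pᵏ·xᵏ)⁺`, which vanishes on every budget set `{z | pᵏ·z ≤ pᵏ·xᵏ}` but is
positive at each `yᵏ` (since `xᵏ < yˡ` and `pᵏ ≫ 0`), keeps `u + w` a rationalization of the
first dataset while putting every `yᵏ` strictly above every `xˡ`. An affine rescaling
`c + ε v` of `v` can then be slid between the two families, and `min (u + w) (c + ε v)` agrees
with `u + w` on the `xˡ` and with `c + ε v` on the `yᵏ`; a smaller increasing function that
agrees with a rationalization on the observed bundles is again a rationalization.
-/

variable {m K : ℕ}

lemma dot_le_dot {p a b : Fin m → ℝ} (hp : 0 ≤ p) (h : a ≤ b) : dot p a ≤ dot p b :=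
  sum_le_sum fun j _ => mul_le_mul_of_nonneg_left (h j) (hp j)

lemma dot_lt_dot {p a b : Fin m → ℝ} (hp : StrLt 0 p) (h : a < b) : dot p a < dot p b := by
  obtain ⟨hle, j, hj⟩ := Pi.lt_def.mp h
  exact sum_lt_sum (fun i _ => mul_le_mul_of_nonneg_left (hle i) (hp i).le)
    ⟨j, mem_univ j, mul_lt_mul_of_pos_left hj (hp j)⟩

lemma exists_affine_between {ι : Type*} [Finite ι] (a b s t : ι → ℝ)
    (hab : ∀ l k, a l < b k) (hst : ∀ l k, s l ≤ t k) :
    ∃ c ε : ℝ, 0 < ε ∧ (∀ l, a l ≤ c + ε * s l) ∧ ∀ k, c + ε * t k ≤ b k := by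
  cases isEmpty_or_nonempty ι
  · exact ⟨0, 1, one_pos, isEmptyElim, isEmptyElim⟩
  obtain ⟨l₀, ha⟩ := Finite.exists_max a
  obtain ⟨k₀, hb⟩ := Finite.exists_min b
  obtain ⟨l₁, hs⟩ := Finite.exists_min s
  obtain ⟨k₁, ht⟩ := Finite.exists_max t
  have hgap : 0 < b k₀ - a l₀ := sub_pos.mpr (hab l₀ k₀)
  have hspread : 0 ≤ t k₁ - s l₁ := sub_nonneg.mpr (hst l₁ k₁)
  set ε := (b k₀ - a l₀) / (t k₁ - s l₁ + 1)
  have hε : 0 < ε := by positivity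
  have hεspread : ε * (t k₁ - s l₁) ≤ b k₀ - a l₀ := by
    rw [div_mul_eq_mul_div, div_le_iff₀ (by positivity)]
    nlinarith
  refine ⟨a l₀ - ε * s l₁, ε, hε, fun l => ?_, fun k => ?_⟩
  · nlinarith [ha l, hs l]
  · nlinarith [ht k, hb k]

def costExcess (p x : Fin K → Fin m → ℝ) (z : Fin m → ℝ) : ℝ :=
  ∏ k, max (dot (p k) z - dot (p k) (x k)) 0

section costExcess

variable {p x : Fin K → Fin m → ℝ} {z : Fin m → ℝ}

lemma costExcess_monotone (hp : ∀ k, 0 ≤ p k) : Monotone (costExcess p x) := fun _ _ h =>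
  prod_le_prod (fun _ _ => le_max_right _ _) fun k _ =>
    max_le_max (sub_le_sub_right (dot_le_dot (hp k) h) _) le_rfl

lemma costExcess_eq_zero {k : Fin K} (h : dot (p k) z ≤ dot (p k) (x k)) :
    costExcess p x z = 0 :=
  prod_eq_zero (mem_univ k) (max_eq_right (sub_nonpos.mpr h))

lemma costExcess_pos (h : ∀ k, dot (p k) (x k) < dot (p k) z) : 0 < costExcess p x z :=
  prod_pos fun k _ => lt_max_of_lt_left (sub_pos.mpr (h k))

end costExcess

section Incr

variable {u v : (Fin m → ℝ) → ℝ}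

lemma Incr.add_monotone (hu : Incr u) (hv : Monotone v) : Incr (u + v) :=
  ⟨fun z z' hz h => add_le_add (hu.1 z z' hz h) (hv h),
    fun z z' hz h => add_lt_add_of_lt_of_le (hu.2 z z' hz h) (hv fun j => (h j).le)⟩

lemma Incr.min (hu : Incr u) (hv : Incr v) : Incr fun z => min (u z) (v z) :=
  ⟨fun z z' hz h => min_le_min (hu.1 z z' hz h) (hv.1 z z' hz h),
    fun z z' hz h => lt_min (min_lt_of_left_lt (hu.2 z z' hz h))
      (min_lt_of_right_lt (hv.2 z z' hz h))⟩

lemma Incr.comp_strictMono (hu : Incr u) {g : ℝ → ℝ} (hg : StrictMono g) : Incr (g ∘ u) :=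
  ⟨fun z z' hz h => hg.monotone (hu.1 z z' hz h), fun z z' hz h => hg (hu.2 z z' hz h)⟩

end Incr

namespace Rationalizes

variable {p x : Fin K → Fin m → ℝ} {u v : (Fin m → ℝ) → ℝ}

lemma le_of_dot_le (hu : Rationalizes p x u) {k : Fin K} {z : Fin m → ℝ} (hz : 0 ≤ z)
    (h : dot (p k) z ≤ dot (p k) (x k)) : u z ≤ u (x k) :=
  le_of_not_gt fun hlt => (hu.2 k z hz hlt).not_ge h

lemma comp_strictMono (hu : Rationalizes p x u) {g : ℝ → ℝ} (hg : StrictMono g) :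
    Rationalizes p x (g ∘ u) :=
  ⟨hu.1.comp_strictMono hg, fun k z hz h => hu.2 k z hz (hg.lt_iff_lt.mp h)⟩

lemma add_costExcess (hu : Rationalizes p x u) (hp : ∀ k, 0 ≤ p k) :
    Rationalizes p x (u + costExcess p x) := by
  refine ⟨hu.1.add_monotone (costExcess_monotone hp), fun k z hz h => ?_⟩
  by_contra! hcost
  have hux : u z ≤ u (x k) := hu.le_of_dot_le hz hcost
  simp only [Pi.add_apply, costExcess_eq_zero hcost, costExcess_eq_zero le_rfl, add_zero] at h
  linarith

lemma of_le (hv : Rationalizes p x v) (hu : Incr u) (hle : ∀ z, u z ≤ v z)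
    (heq : ∀ k, u (x k) = v (x k)) : Rationalizes p x u :=
  ⟨hu, fun k z hz h => hv.2 k z hz ((heq k).symm.trans_lt h |>.trans_le (hle z))⟩

end Rationalizes

theorem stmt12_general {m K : ℕ}
    (p : Fin K → Fin m → ℝ) (hp : ∀ k, StrLt 0 (p k))
    (x y : Fin K → Fin m → ℝ) (hx : ∀ k, 0 ≤ x k)
    (hDx : ∃ u : (Fin m → ℝ) → ℝ, Rationalizes p x u)
    (hDy : ∃ u : (Fin m → ℝ) → ℝ, Rationalizes p y u)
    (hlt : ∀ k l, x l ≤ y k ∧ x l ≠ y k) :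
    ∃ u : (Fin m → ℝ) → ℝ, Rationalizes p x u ∧ Rationalizes p y u := by
  obtain ⟨ux, hux⟩ := hDx
  obtain ⟨uy, huy⟩ := hDy
  have hxy : ∀ l k, x l < y k := fun l k => lt_of_le_of_ne (hlt k l).1 (hlt k l).2
  set f := ux + costExcess p x
  have hf : Rationalizes p x f := hux.add_costExcess fun k j => (hp k j).le
  have hfx : ∀ l, f (x l) = ux (x l) := fun l => by simp [f, costExcess_eq_zero le_rfl]
  have hgap : ∀ l k, ux (x l) < f (y k) := fun l k => by
    have hpos : 0 < costExcess p x (y k) := costExcess_pos fun i => dot_lt_dot (hp i) (hxy i k)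
    have hmono : ux (x l) ≤ ux (y k) := hux.1.1 _ _ (hx l) (hxy l k).le
    simp only [f, Pi.add_apply]
    linarith
  obtain ⟨c, ε, hε, hcx, hcy⟩ := exists_affine_between (ux ∘ x) (f ∘ y) (uy ∘ x) (uy ∘ y)
    hgap fun l k => huy.1.1 _ _ (hx l) (hxy l k).le
  set g := (fun t => c + ε * t) ∘ uy
  have hg : Rationalizes p y g :=
    huy.comp_strictMono fun _ _ h => by simpa using mul_lt_mul_of_pos_left h hε
  have hmin : Incr fun z => min (f z) (g z) := hf.1.min hg.1
  exact ⟨_, hf.of_le hmin (fun _ => min_le_left _ _)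
      fun l => min_eq_left ((hfx l).trans_le (hcx l)),
    hg.of_le hmin (fun _ => min_le_right _ _) fun k => min_eq_right (hcy k)⟩

/-- If two individual datasets share the same strictly positive prices,
each is rationalizable, and every bundle of the first is componentwise below (and not equal
to) every bundle of the second, then their union is rationalizable (by a single increasing
utility). -/
theorem stmt12 {m K : ℕ} (hm : 0 < m)
    (p : Fin K → Fin m → ℝ) (hp : ∀ k, StrLt 0 (p k))
    (x y : Fin K → Fin m → ℝ) (hx : ∀ k, 0 ≤ x k) (hy : ∀ k, 0 ≤ y k)
    (hDx : ∃ u : (Fin m → ℝ) → ℝ, Rationalizes p x u)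
    (hDy : ∃ u : (Fin m → ℝ) → ℝ, Rationalizes p y u)
    (hlt : ∀ k l, x l ≤ y k ∧ x l ≠ y k) :
    ∃ u : (Fin m → ℝ) → ℝ, Rationalizes p x u ∧ Rationalizes p y u :=
  stmt12_general p hp x y hx hDx hDy hlt
end
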